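/- The function x ↦ 1/sinc(x) = x/sin(x) is convex on the interval [0, π). -/

import Mathlib

/-!
Away from `0` the function is `x / sin x`, whose second derivative is `g x / sin x ^ 3` with
`g x = x (1 + cos² x) - 2 sin x cos x`. Since `g' x = sin x (sin x + 2 (sin x - x cos x))`
and `x cos x ≤ sin x` on `[0, π]` (from `x ≤ tan x` where `cos x > 0`), `g` increases from
`g 0 = 0`, so the second derivative is nonnegative on `(0, π)`. Continuity at `0` comes from
writing the function as `(sinc x)⁻¹`, with `sinc` continuous and positive on `(-π, π)`.
-/

open Real Set

namespace Real

lemma sinc_pos {x : ℝ} (hx : x ∈ Ioo (-π) π) : 0 < sinc x := by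
  rcases lt_trichotomy x 0 with hneg | rfl | hpos
  · rw [sinc_of_ne_zero hneg.ne]
    exact div_pos_of_neg_of_neg (sin_neg_of_neg_of_neg_pi_lt hneg hx.1) hneg
  · simp [sinc_zero]
  · rw [sinc_of_ne_zero hpos.ne']
    exact div_pos (sin_pos_of_pos_of_lt_pi hpos hx.2) hpos

lemma inv_sinc_of_ne_zero {x : ℝ} (hx : x ≠ 0) : (sinc x)⁻¹ = x / sin x := by
  rw [sinc_of_ne_zero hx, inv_div]

lemma ne_zero_of_sin_ne_zero {x : ℝ} (hx : sin x ≠ 0) : x ≠ 0 := by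
  rintro rfl
  exact hx sin_zero

lemma mul_cos_le_sin {x : ℝ} (h0 : 0 ≤ x) (hπ : x ≤ π) : x * cos x ≤ sin x := by
  rcases le_or_gt (cos x) 0 with hcos | hcos
  · exact (mul_nonpos_of_nonneg_of_nonpos h0 hcos).trans (sin_nonneg_of_nonneg_of_le_pi h0 hπ)
  · have hx : x < π / 2 := by
      by_contra! h
      exact hcos.not_ge (cos_nonpos_of_pi_div_two_le_of_le h (by linarith))
    have := le_tan h0 hx
    rwa [tan_eq_sin_div_cos, le_div_iff₀ hcos] at this

lemma two_mul_sin_mul_cos_le_mul_one_add_cos_sq {x : ℝ} (h0 : 0 ≤ x) (hπ : x ≤ π) :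
    2 * sin x * cos x ≤ x * (1 + cos x ^ 2) := by
  set g : ℝ → ℝ := fun y => y * (1 + cos y ^ 2) - 2 * sin y * cos y with hg
  have hg' (y : ℝ) : HasDerivAt g (sin y * (sin y + 2 * (sin y - y * cos y))) y := by
    refine (((hasDerivAt_id' y).fun_mul
      ((hasDerivAt_const y 1).fun_add ((hasDerivAt_cos y).fun_pow 2))).fun_sub
      (((hasDerivAt_sin y).const_mul 2).fun_mul (hasDerivAt_cos y))).congr_deriv ?_
    push_cast
    linear_combination (-1 : ℝ) * sin_sq_add_cos_sq y
  have hmono : MonotoneOn g (Icc 0 π) := by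
    refine monotoneOn_of_deriv_nonneg (convex_Icc 0 π)
      (fun y _ => (hg' y).continuousAt.continuousWithinAt)
      (fun y _ => (hg' y).differentiableAt.differentiableWithinAt) fun y hy => ?_
    rw [interior_Icc] at hy
    rw [(hg' y).deriv]
    have hsin := sin_nonneg_of_nonneg_of_le_pi hy.1.le hy.2.le
    have := mul_cos_le_sin hy.1.le hy.2.le
    exact mul_nonneg hsin (by linarith)
  have := hmono (left_mem_Icc.2 pi_pos.le) ⟨h0, hπ⟩ h0
  simp only [hg, sin_zero, zero_mul, mul_zero, sub_zero] at this
  linarith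

lemma hasDerivAt_div_sin {x : ℝ} (hx : sin x ≠ 0) :
    HasDerivAt (fun y => y / sin y) ((sin x - x * cos x) / sin x ^ 2) x := by
  simpa using (hasDerivAt_id' x).fun_div (hasDerivAt_sin x) hx

lemma hasDerivAt_sin_sub_mul_cos_div_sin_sq {x : ℝ} (hx : sin x ≠ 0) :
    HasDerivAt (fun y => (sin y - y * cos y) / sin y ^ 2)
      ((x * (1 + cos x ^ 2) - 2 * sin x * cos x) / sin x ^ 3) x := by
  have hnum := (hasDerivAt_sin x).fun_sub ((hasDerivAt_id' x).fun_mul (hasDerivAt_cos x))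
  refine (hnum.fun_div ((hasDerivAt_sin x).fun_pow 2) (pow_ne_zero 2 hx)).congr_deriv ?_
  rw [div_eq_div_iff (by positivity) (by positivity)]
  push_cast
  linear_combination x * sin x ^ 4 * sin_sq_add_cos_sq x

lemma hasDerivAt_inv_sinc {x : ℝ} (hx : sin x ≠ 0) :
    HasDerivAt (fun y => (sinc y)⁻¹) ((sin x - x * cos x) / sin x ^ 2) x := by
  refine (hasDerivAt_div_sin hx).congr_of_eventuallyEq ?_
  filter_upwards [eventually_ne_nhds (ne_zero_of_sin_ne_zero hx)] with y hy
  exact inv_sinc_of_ne_zero hy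

lemma hasDerivAt_deriv_inv_sinc {x : ℝ} (hx : sin x ≠ 0) :
    HasDerivAt (deriv fun y => (sinc y)⁻¹)
      ((x * (1 + cos x ^ 2) - 2 * sin x * cos x) / sin x ^ 3) x := by
  refine (hasDerivAt_sin_sub_mul_cos_div_sin_sq hx).congr_of_eventuallyEq ?_
  filter_upwards [continuous_sin.continuousAt.eventually_ne hx] with y hy
  exact (hasDerivAt_inv_sinc hy).deriv

end Real

theorem invSinc_convexOn :
    ConvexOn ℝ (Set.Ico (0 : ℝ) Real.pi)
      (fun x : ℝ => if x = 0 then 1 else x / Real.sin x) := by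
  have h_eq : (fun x : ℝ => if x = 0 then 1 else x / sin x) = fun x => (sinc x)⁻¹ := by
    funext x
    split_ifs with hx
    · simp [hx, sinc_zero]
    · exact (inv_sinc_of_ne_zero hx).symm
  rw [h_eq]
  have hsin_pos : ∀ x ∈ interior (Ico 0 π), 0 < sin x := by
    rw [interior_Ico]
    exact fun x hx => sin_pos_of_pos_of_lt_pi hx.1 hx.2
  refine convexOn_of_deriv2_nonneg (convex_Ico 0 π) ?_ ?_ ?_ ?_
  · exact continuous_sinc.continuousOn.inv₀ fun x hx =>
      (sinc_pos ⟨by linarith [pi_pos, hx.1], hx.2⟩).ne'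
  · exact fun x hx =>
      (hasDerivAt_inv_sinc (hsin_pos x hx).ne').differentiableAt.differentiableWithinAt
  · exact fun x hx =>
      (hasDerivAt_deriv_inv_sinc (hsin_pos x hx).ne').differentiableAt.differentiableWithinAt
  · intro x hx
    have hxπ : x ∈ Ioo 0 π := by rwa [interior_Ico] at hx
    rw [Function.iterate_succ_apply', Function.iterate_one,
      (hasDerivAt_deriv_inv_sinc (hsin_pos x hx).ne').deriv]
    exact div_nonneg
      (sub_nonneg.2 (two_mul_sin_mul_cos_le_mul_one_add_cos_sq hxπ.1.le hxπ.2.le))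
      (pow_nonneg (hsin_pos x hx).le 3)
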